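/- arXiv:2603.14904 — 2 statements merged into one kernel-verified Lean document; each statement's English description precedes it below -/
import Mathlib

section
/- Let γ: [0,1] → ℝ² be the C¹ curve γ(x) = (C·x, y(x)) with C > 0, let x ∈ [0,1], and let (pₙ, qₙ) ∈ ℕ × ℕ* satisfy pₙ/qₙ ∈ [0,1], pₙ/qₙ → x and qₙ → ∞. Then y'(x) = limₙ (qₙ+1)! · S_{pₙ, qₙ−pₙ} / C^{qₙ}, where S_{k,l} is the signature coefficient of γ on e₁^⊗k ⊗ e₂ ⊗ e₁^⊗l. -/
/-!
After the substitution `(k + l + 1)! S_{k,l} / C^(k+l) = ∫ K_{k,l} y'`, where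
`K_{k,l}(s) = (k+l+1)!/(k! l!) s^k (1-s)^l` is the density of the Beta(k+1, l+1) distribution,
the claim says that these densities form an approximate identity at `x`. They are nonnegative of
mass one, and since `s K_{k,l} = (k+1)/(n+2) K_{k+1,l}` (with `n = k + l`) their second moment
about `x` is `m₁ (k+2)/(n+3) - 2 x m₁ + x²` with `m₁ = (k+1)/(n+2)`, which tends to `0` when
`k/n → x` and `n → ∞`. Continuity of `y'` at `x` and its boundedness on `[0,1]` give
`|y' s - y' x| ≤ ε + c (s - x)²`, and integrating against `K_{k,l}` yields the limit.
-/

open Nat Set Filter Topology intervalIntegral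

noncomputable def betaKernel (a b : ℕ) (s : ℝ) : ℝ :=
  ((a + b + 1)! : ℝ) / ((a ! : ℝ) * (b ! : ℝ)) * (s ^ a * (1 - s) ^ b)

namespace betaKernel

theorem continuous (a b : ℕ) : Continuous (betaKernel a b) := by
  unfold betaKernel; fun_prop

theorem nonneg (a b : ℕ) {s : ℝ} (hs : s ∈ Icc (0 : ℝ) 1) : 0 ≤ betaKernel a b s :=
  mul_nonneg (by positivity) (mul_nonneg (pow_nonneg hs.1 _) (pow_nonneg (sub_nonneg.2 hs.2) _))

theorem mul_eq_succ_left (a b : ℕ) (s : ℝ) :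
    s * betaKernel a b s = (a + 1) / (a + b + 2) * betaKernel (a + 1) b s := by
  simp only [betaKernel, show a + 1 + b + 1 = (a + b + 1) + 1 by omega, factorial_succ]
  push_cast
  field_simp
  ring

theorem hasDerivAt_sub_succ (a b : ℕ) (s : ℝ) :
    HasDerivAt (fun t => ((a + b + 2)! : ℝ) / ((a + 1)! * (b + 1)!) * (t ^ (a + 1) * (1 - t) ^ (b + 1)))
      (betaKernel a (b + 1) s - betaKernel (a + 1) b s) s := by
  refine (((hasDerivAt_pow (a + 1) s).fun_mul
    (((hasDerivAt_id s).const_sub 1).fun_pow (b + 1))).const_mul _).congr_deriv ?_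
  simp only [betaKernel, show a + (b + 1) + 1 = a + b + 2 by omega,
    show a + 1 + b + 1 = a + b + 2 by omega, factorial_succ, add_tsub_cancel_right, id]
  push_cast
  field_simp
  ring

theorem integral_succ_right (a b : ℕ) :
    ∫ s in (0 : ℝ)..1, betaKernel a (b + 1) s = ∫ s in (0 : ℝ)..1, betaKernel (a + 1) b s := by
  rw [← sub_eq_zero, ← integral_sub ((continuous _ _).intervalIntegrable _ _)
    ((continuous _ _).intervalIntegrable _ _),
    integral_eq_sub_of_hasDerivAt (fun s _ => hasDerivAt_sub_succ a b s)
      (((continuous _ _).sub (continuous _ _)).intervalIntegrable _ _)]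
  simp

theorem integral_eq_one (a b : ℕ) : ∫ s in (0 : ℝ)..1, betaKernel a b s = 1 := by
  induction b generalizing a with
  | zero =>
    simp only [betaKernel, pow_zero, mul_one, add_zero, factorial_zero, cast_one, integral_const_mul,
      integral_pow, factorial_succ]
    push_cast
    field_simp
    simp
  | succ b ih => rw [integral_succ_right, ih]

theorem integral_mul_sq_sub (a b : ℕ) (x : ℝ) :
    ∫ s in (0 : ℝ)..1, betaKernel a b s * (s - x) ^ 2 =
      (a + 1) / (a + b + 2) * ((a + 2) / (a + b + 3)) - 2 * x * ((a + 1) / (a + b + 2)) + x ^ 2 := by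
  have hint : ∀ a b, IntervalIntegrable (betaKernel a b) MeasureTheory.volume 0 1 :=
    fun a b => (continuous a b).intervalIntegrable 0 1
  have hpoint : ∀ s, betaKernel a b s * (s - x) ^ 2 =
      (a + 1) / (a + b + 2) * ((a + 2) / (a + b + 3)) * betaKernel (a + 2) b s
        - 2 * x * ((a + 1) / (a + b + 2)) * betaKernel (a + 1) b s + x ^ 2 * betaKernel a b s := by
    intro s
    have h1 := mul_eq_succ_left a b s
    have h2 := mul_eq_succ_left (a + 1) b s
    push_cast at h2
    linear_combination (s - 2 * x) * h1 + (a + 1) / (a + b + 2) * h2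
  simp only [hpoint]
  rw [integral_add (((hint _ _).const_mul _).sub ((hint _ _).const_mul _)) ((hint _ _).const_mul _),
    integral_sub ((hint _ _).const_mul _) ((hint _ _).const_mul _)]
  simp only [integral_const_mul, integral_eq_one, mul_one]

end betaKernel

theorem Filter.Tendsto.add_div_add {ι : Type*} {l : Filter ι} {u v : ι → ℝ} {x : ℝ}
    (hx : Tendsto (fun i => u i / v i) l (𝓝 x)) (hv : Tendsto v l atTop) (c d : ℝ) :
    Tendsto (fun i => (u i + c) / (v i + d)) l (𝓝 x) := by
  have h := (hx.add ((tendsto_const_nhds (x := c)).div_atTop hv)).div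
    ((tendsto_const_nhds (x := 1)).add ((tendsto_const_nhds (x := d)).div_atTop hv)) (by simp)
  rw [add_zero, add_zero, div_one] at h
  refine h.congr' ((hv.eventually_ne_atTop 0).mono fun i hi => ?_)
  simp only [Pi.div_apply]
  rw [← add_div, ← div_self hi, ← add_div, div_div_div_cancel_right₀ hi]

theorem tendsto_integral_betaKernel_mul_sq_sub {ι : Type*} {l : Filter ι} {a b : ι → ℕ} {x : ℝ}
    (hx : Tendsto (fun i => (a i : ℝ) / (a i + b i)) l (𝓝 x))
    (hN : Tendsto (fun i => (a i : ℝ) + b i) l atTop) :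
    Tendsto (fun i => ∫ s in (0 : ℝ)..1, betaKernel (a i) (b i) s * (s - x) ^ 2) l (𝓝 0) := by
  have h1 := hx.add_div_add hN 1 2
  have h2 := hx.add_div_add hN 2 3
  simp only [betaKernel.integral_mul_sq_sub]
  convert ((h1.mul h2).sub (h1.const_mul (2 * x))).add_const (x ^ 2) using 2
  ring

theorem IsCompact.exists_abs_sub_le_add_mul_sq {t : Set ℝ} (ht : IsCompact t) {f : ℝ → ℝ}
    (hf : ContinuousOn f t) {x : ℝ} (hx : x ∈ t) {ε : ℝ} (hε : 0 < ε) :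
    ∃ c, ∀ s ∈ t, |f s - f x| ≤ ε + c * (s - x) ^ 2 := by
  obtain ⟨M, hM⟩ := ht.exists_bound_of_continuousOn hf
  obtain ⟨δ, hδ, hfδ⟩ := Metric.continuousWithinAt_iff.1 (hf x hx) ε hε
  refine ⟨2 * M / δ ^ 2, fun s hs => ?_⟩
  rcases lt_or_ge (dist s x) δ with hnear | hfar
  · have := hfδ hs hnear
    rw [Real.dist_eq] at this
    have : 0 ≤ 2 * M / δ ^ 2 * (s - x) ^ 2 :=
      mul_nonneg (div_nonneg (by linarith [(norm_nonneg _).trans (hM x hx)]) (sq_nonneg _))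
        (sq_nonneg _)
    linarith
  · have hsx : δ ^ 2 ≤ (s - x) ^ 2 := by
      rw [← sq_abs (s - x), ← Real.dist_eq]
      exact pow_le_pow_left₀ hδ.le hfar 2
    have hfar_bound : 2 * M ≤ 2 * M / δ ^ 2 * (s - x) ^ 2 := by
      rw [div_mul_eq_mul_div, le_div_iff₀ (by positivity)]
      exact mul_le_mul_of_nonneg_left hsx (by linarith [(norm_nonneg _).trans (hM x hx)])
    have := abs_sub (f s) (f x)
    have := hM s hs
    have := hM x hx
    simp only [Real.norm_eq_abs] at *
    linarith

theorem abs_integral_mul_sub_le {K f : ℝ → ℝ} {x ε c : ℝ} (hK : Continuous K)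
    (hf : ContinuousOn f (Icc 0 1)) (hK0 : ∀ s ∈ Icc (0 : ℝ) 1, 0 ≤ K s)
    (hK1 : ∫ s in (0 : ℝ)..1, K s = 1)
    (hfx : ∀ s ∈ Icc (0 : ℝ) 1, |f s - f x| ≤ ε + c * (s - x) ^ 2) :
    |(∫ s in (0 : ℝ)..1, K s * f s) - f x| ≤ ε + c * ∫ s in (0 : ℝ)..1, K s * (s - x) ^ 2 := by
  have hIcc : uIcc (0 : ℝ) 1 = Icc 0 1 := uIcc_of_le zero_le_one
  have hKi : IntervalIntegrable K MeasureTheory.volume 0 1 := hK.intervalIntegrable 0 1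
  have hKf : IntervalIntegrable (fun s => K s * f s) MeasureTheory.volume 0 1 :=
    (hK.continuousOn.mul (hIcc ▸ hf)).intervalIntegrable
  have hKsq : IntervalIntegrable (fun s => K s * (s - x) ^ 2) MeasureTheory.volume 0 1 :=
    (hK.mul (by fun_prop)).intervalIntegrable 0 1
  have hcenter : (∫ s in (0 : ℝ)..1, K s * f s) - f x = ∫ s in (0 : ℝ)..1, K s * (f s - f x) := by
    simp only [mul_sub]
    rw [integral_sub hKf (hKi.mul_const _), integral_mul_const, hK1, one_mul]
  have hmajorant : ∫ s in (0 : ℝ)..1, K s * (ε + c * (s - x) ^ 2) =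
      ε + c * ∫ s in (0 : ℝ)..1, K s * (s - x) ^ 2 := by
    simp only [mul_add, mul_left_comm (K _) c]
    rw [integral_add (hKi.mul_const _) (hKsq.const_mul _), integral_mul_const, integral_const_mul,
      hK1, one_mul]
  rw [hcenter, ← hmajorant]
  refine (abs_integral_le_integral_abs zero_le_one).trans
    (integral_mono_on zero_le_one (by simpa only [mul_sub] using (hKf.sub (hKi.mul_const _)).abs)
      (hKi.mul_continuousOn (by fun_prop)) fun s hs => ?_)
  rw [abs_mul, abs_of_nonneg (hK0 s hs)]
  exact mul_le_mul_of_nonneg_left (hfx s hs) (hK0 s hs)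

theorem tendsto_integral_mul_of_tendsto_integral_mul_sq_sub {ι : Type*} {l : Filter ι}
    {K : ι → ℝ → ℝ} {f : ℝ → ℝ} {x : ℝ} (hf : ContinuousOn f (Icc 0 1)) (hx : x ∈ Icc (0 : ℝ) 1)
    (hK : ∀ i, Continuous (K i)) (hK0 : ∀ i, ∀ s ∈ Icc (0 : ℝ) 1, 0 ≤ K i s)
    (hK1 : ∀ i, ∫ s in (0 : ℝ)..1, K i s = 1)
    (hK2 : Tendsto (fun i => ∫ s in (0 : ℝ)..1, K i s * (s - x) ^ 2) l (𝓝 0)) :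
    Tendsto (fun i => ∫ s in (0 : ℝ)..1, K i s * f s) l (𝓝 (f x)) := by
  rw [Metric.tendsto_nhds]
  intro ε hε
  obtain ⟨c, hc⟩ := isCompact_Icc.exists_abs_sub_le_add_mul_sq hf hx (half_pos hε)
  have hsmall := (Metric.tendsto_nhds.1 (by simpa using hK2.const_mul c)) (ε / 2) (half_pos hε)
  filter_upwards [hsmall] with i hi
  rw [Real.dist_eq, sub_zero] at hi
  rw [Real.dist_eq]
  have := abs_integral_mul_sub_le (hK i) hf (hK0 i) (hK1 i) hc
  linarith [le_abs_self (c * ∫ s in (0 : ℝ)..1, K i s * (s - x) ^ 2)]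

theorem tendsto_integral_betaKernel_mul {ι : Type*} {l : Filter ι} {a b : ι → ℕ} {f : ℝ → ℝ}
    {x : ℝ} (hf : ContinuousOn f (Icc 0 1)) (hx : x ∈ Icc (0 : ℝ) 1)
    (hax : Tendsto (fun i => (a i : ℝ) / (a i + b i)) l (𝓝 x))
    (hN : Tendsto (fun i => (a i : ℝ) + b i) l atTop) :
    Tendsto (fun i => ∫ s in (0 : ℝ)..1, betaKernel (a i) (b i) s * f s) l (𝓝 (f x)) :=
  tendsto_integral_mul_of_tendsto_integral_mul_sq_sub hf hx (fun _ => betaKernel.continuous _ _)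
    (fun _ _ => betaKernel.nonneg _ _) (fun _ => betaKernel.integral_eq_one _ _)
    (tendsto_integral_betaKernel_mul_sq_sub hax hN)

theorem stmt_10_general (C : ℝ) (hC : 0 < C) (y' : ℝ → ℝ)
    (hy' : ContinuousOn y' (Set.Icc (0:ℝ) 1))
    (S : ℕ → ℕ → ℝ)
    (hS : ∀ k l, S k l = C ^ (k + l) *
      ∫ s in (0:ℝ)..1, s ^ k * (1 - s) ^ l / (k.factorial * l.factorial) * y' s)
    (x : ℝ) (hx : x ∈ Set.Icc (0:ℝ) 1)
    (p q : ℕ → ℕ)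
    (hpq : ∀ n, (p n : ℝ) / (q n : ℝ) ∈ Set.Icc (0:ℝ) 1)
    (hqt : Filter.Tendsto q Filter.atTop Filter.atTop)
    (hxa : Filter.Tendsto (fun n => (p n : ℝ) / (q n : ℝ)) Filter.atTop (nhds x)) :
    Filter.Tendsto (fun n => ((q n + 1).factorial : ℝ) * S (p n) (q n - p n) / C ^ (q n))
      Filter.atTop (nhds (y' x)) := by
  have hSK : ∀ k l, ((k + l + 1)! : ℝ) * S k l / C ^ (k + l) =
      ∫ s in (0 : ℝ)..1, betaKernel k l s * y' s := by
    intro k l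
    rw [hS, mul_left_comm, mul_div_cancel_left₀ _ (pow_ne_zero _ hC.ne'), ← integral_const_mul]
    congr 1 with s
    rw [betaKernel]
    ring
  have hsplit : ∀ᶠ n in atTop, p n + (q n - p n) = q n :=
    (hqt.eventually_gt_atTop 0).mono fun n hn => Nat.add_sub_cancel' <| by
      exact_mod_cast (div_le_one (by positivity)).1 (hpq n).2
  have hsplit' : ∀ᶠ n in atTop, (p n : ℝ) + (q n - p n : ℕ) = q n :=
    hsplit.mono fun n h => by exact_mod_cast h
  refine (tendsto_integral_betaKernel_mul hy' hx
    (hxa.congr' (hsplit'.mono fun n h => by simp only [h]))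
    ((tendsto_natCast_atTop_atTop.comp hqt).congr' (hsplit'.mono fun n h => h.symm))).congr'
    (hsplit.mono fun n h => ?_)
  rw [← hSK, h]

theorem stmt_10 (C : ℝ) (hC : 0 < C) (y y' : ℝ → ℝ)
    (hy : ∀ s ∈ Set.Icc (0:ℝ) 1, HasDerivAt y (y' s) s)
    (hy' : ContinuousOn y' (Set.Icc (0:ℝ) 1))
    (S : ℕ → ℕ → ℝ)
    (hS : ∀ k l, S k l = C ^ (k + l) *
      ∫ s in (0:ℝ)..1, s ^ k * (1 - s) ^ l / (k.factorial * l.factorial) * y' s)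
    (x : ℝ) (hx : x ∈ Set.Icc (0:ℝ) 1)
    (p q : ℕ → ℕ) (hq : ∀ n, 0 < q n)
    (hpq : ∀ n, (p n : ℝ) / (q n : ℝ) ∈ Set.Icc (0:ℝ) 1)
    (hqt : Filter.Tendsto q Filter.atTop Filter.atTop)
    (hxa : Filter.Tendsto (fun n => (p n : ℝ) / (q n : ℝ)) Filter.atTop (nhds x)) :
    Filter.Tendsto (fun n => ((q n + 1).factorial : ℝ) * S (p n) (q n - p n) / C ^ (q n))
      Filter.atTop (nhds (y' x)) :=
  stmt_10_general C hC y' hy' S hS x hx p q hpq hqt hxa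
end

section
/- Let γ(x) = (C·x, y(x)) on [0,1] with C > 0 and y ∈ C¹, and let (pₙ, qₙ): [0,1] → ℕ × ℕ* be a uniform rational approximation. Then sup_{x∈[0,1]} | y'(x) − (qₙ(x)+1)! · S_{pₙ(x), qₙ(x)−pₙ(x)} / C^{qₙ(x)} | → 0 as n → ∞. -/
/-!
With `m = k + l`, the quantity `(m + 1)! S_{k,l} / C^m` is the average of `y'` against the
Beta(k + 1, l + 1) density `(m + 1)!/(k! l!) s^k (1 - s)^l` on `[0, 1]`. Uniform continuity of `y'`
gives `|y' s - y' x| ≤ ε + c (s - x)^2`, so the error at `x` is at most `ε + c` times the second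
moment of the density about `x`. That moment is the variance, `O(1/m)`, plus the squared distance
from the mean `(k + 1)/(m + 2)` to `x`, which is within `1/m` of `k/m ≈ x`; both vanish uniformly
since `qₙ → ∞` and `pₙ/qₙ → x` uniformly.
-/

open Nat MeasureTheory Filter Topology

lemma IsCompact.exists_abs_sub_le_add_mul_dist_sq {α : Type*} [PseudoMetricSpace α] {K : Set α}
    {f : α → ℝ} (hK : IsCompact K) (hf : ContinuousOn f K) {ε : ℝ} (hε : 0 < ε) :
    ∃ c, 0 ≤ c ∧ ∀ x ∈ K, ∀ s ∈ K, |f s - f x| ≤ ε + c * dist s x ^ 2 := by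
  obtain ⟨M, hM⟩ := hK.exists_bound_of_continuousOn hf
  obtain ⟨δ, hδ, hfδ⟩ :=
    Metric.uniformContinuousOn_iff.1 (hK.uniformContinuousOn_of_continuous hf) ε hε
  refine ⟨2 * |M| / δ ^ 2, by positivity, fun x hx s hs => ?_⟩
  rcases lt_or_ge (dist s x) δ with hnear | hfar
  · have := (hfδ s hs x hx hnear).le
    rw [Real.dist_eq] at this
    have : 0 ≤ 2 * |M| / δ ^ 2 * dist s x ^ 2 := by positivity
    linarith
  · -- far from `x`, the oscillation `2|M|` is paid for by `dist s x ^ 2 ≥ δ ^ 2`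
    have hosc : |f s - f x| ≤ 2 * |M| := by
      have := hM s hs; have := hM x hx
      rw [Real.norm_eq_abs] at *
      linarith [abs_sub (f s) (f x), le_abs_self M]
    have : 2 * |M| ≤ 2 * |M| / δ ^ 2 * dist s x ^ 2 := by
      rw [div_mul_eq_mul_div, le_div_iff₀ (by positivity)]
      gcongr
    linarith

lemma abs_sub_integral_mul_le {a b : ℝ} (hab : a ≤ b) {ρ f : ℝ → ℝ} {x ε c : ℝ}
    (hρ : Continuous ρ) (hρ_nonneg : ∀ s ∈ Set.Icc a b, 0 ≤ ρ s)
    (hρ_one : ∫ s in a..b, ρ s = 1) (hf : ContinuousOn f (Set.Icc a b))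
    (hfx : ∀ s ∈ Set.Icc a b, |f s - f x| ≤ ε + c * (s - x) ^ 2) :
    |f x - ∫ s in a..b, ρ s * f s| ≤ ε + c * ∫ s in a..b, ρ s * (s - x) ^ 2 := by
  have hρ_int : IntervalIntegrable ρ volume a b := hρ.intervalIntegrable a b
  have hdiff : f x - ∫ s in a..b, ρ s * f s = ∫ s in a..b, ρ s * (f x - f s) := by
    simp only [mul_sub]
    have hρf : IntervalIntegrable (fun s => ρ s * f s) volume a b :=
      (hρ.continuousOn.mul hf).intervalIntegrable_of_Icc hab
    rw [intervalIntegral.integral_sub (hρ_int.mul_const _) hρf,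
      intervalIntegral.integral_mul_const, hρ_one, one_mul]
  have hmajorant : ∫ s in a..b, ρ s * (ε + c * (s - x) ^ 2)
      = ε + c * ∫ s in a..b, ρ s * (s - x) ^ 2 := calc
    _ = ∫ s in a..b, (ε * ρ s + c * (ρ s * (s - x) ^ 2)) := by congr 1 with s; ring
    _ = _ := by
      rw [intervalIntegral.integral_add (hρ_int.const_mul _)
          (Continuous.intervalIntegrable (by fun_prop) _ _),
        intervalIntegral.integral_const_mul, intervalIntegral.integral_const_mul, hρ_one, mul_one]
  rw [hdiff, ← hmajorant]
  refine (intervalIntegral.abs_integral_le_integral_abs hab).trans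
    (intervalIntegral.integral_mono_on hab ?_ ?_ fun s hs => ?_)
  · exact ((hρ.continuousOn.mul (continuousOn_const.sub hf)).intervalIntegrable_of_Icc hab).abs
  · exact Continuous.intervalIntegrable (by fun_prop) _ _
  · rw [abs_mul, abs_of_nonneg (hρ_nonneg s hs), abs_sub_comm]
    exact mul_le_mul_of_nonneg_left (hfx s hs) (hρ_nonneg s hs)

lemma integral_pow_mul_one_sub_pow (k l : ℕ) :
    ∫ s in (0:ℝ)..1, s ^ k * (1 - s) ^ l = (k ! * l ! : ℝ) / (k + l + 1)! := by
  induction l generalizing k with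
  | zero =>
    simp only [pow_zero, mul_one, integral_pow, factorial_zero, add_zero, factorial_succ]
    push_cast
    field_simp
    simp
  | succ l ih =>
    have hsplit : ∫ s in (0:ℝ)..1, s ^ k * (1 - s) ^ (l + 1)
        = (∫ s in (0:ℝ)..1, s ^ k * (1 - s) ^ l)
          - ∫ s in (0:ℝ)..1, s ^ (k + 1) * (1 - s) ^ l := by
      rw [← intervalIntegral.integral_sub (Continuous.intervalIntegrable (by fun_prop) _ _)
        (Continuous.intervalIntegrable (by fun_prop) _ _)]
      congr 1 with s
      ring
    rw [hsplit, ih, ih, show k + 1 + l + 1 = k + l + 1 + 1 by omega,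
      show k + (l + 1) + 1 = k + l + 1 + 1 by omega]
    push_cast [factorial_succ]
    field_simp
    ring

noncomputable def betaDensity (k l : ℕ) (s : ℝ) : ℝ :=
  (k + l + 1)! / (k ! * l !) * (s ^ k * (1 - s) ^ l)

@[fun_prop]
lemma continuous_betaDensity (k l : ℕ) : Continuous (betaDensity k l) := by
  unfold betaDensity; fun_prop

lemma betaDensity_nonneg (k l : ℕ) {s : ℝ} (hs : s ∈ Set.Icc (0:ℝ) 1) :
    0 ≤ betaDensity k l s := by
  have := hs.1; have := hs.2
  unfold betaDensity; positivity

lemma integral_betaDensity_mul_pow (k l j : ℕ) :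
    ∫ s in (0:ℝ)..1, betaDensity k l s * s ^ j
      = (k + j)! / k ! * ((k + l + 1)! / (k + j + l + 1)! : ℝ) := by
  have hcongr : ∫ s in (0:ℝ)..1, betaDensity k l s * s ^ j
      = (k + l + 1)! / (k ! * l ! : ℝ) * ∫ s in (0:ℝ)..1, s ^ (k + j) * (1 - s) ^ l := by
    rw [← intervalIntegral.integral_const_mul]
    congr 1 with s
    simp only [betaDensity]
    ring
  rw [hcongr, integral_pow_mul_one_sub_pow]
  field_simp

lemma integral_betaDensity (k l : ℕ) : ∫ s in (0:ℝ)..1, betaDensity k l s = 1 := by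
  have h := integral_betaDensity_mul_pow k l 0
  simp only [pow_zero, mul_one, add_zero] at h
  rw [h, div_self (by positivity), div_self (by positivity), one_mul]

lemma integral_betaDensity_mul_sub_sq (k l : ℕ) (x : ℝ) :
    ∫ s in (0:ℝ)..1, betaDensity k l s * (s - x) ^ 2
      = (k + 1) * (k + 2) / ((k + l + 2) * (k + l + 3)) - 2 * x * ((k + 1) / (k + l + 2))
        + x ^ 2 := by
  have hexpand : ∫ s in (0:ℝ)..1, betaDensity k l s * (s - x) ^ 2
      = (∫ s in (0:ℝ)..1, betaDensity k l s * s ^ 2)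
        - 2 * x * (∫ s in (0:ℝ)..1, betaDensity k l s * s ^ 1)
        + x ^ 2 * ∫ s in (0:ℝ)..1, betaDensity k l s := by
    simp only [← intervalIntegral.integral_const_mul]
    rw [← intervalIntegral.integral_sub, ← intervalIntegral.integral_add]
    · congr 1 with s; ring
    all_goals exact Continuous.intervalIntegrable (by fun_prop) _ _
  rw [hexpand, integral_betaDensity_mul_pow, integral_betaDensity_mul_pow, integral_betaDensity]
  rw [show k + 2 + l + 1 = k + l + 1 + 1 + 1 by omega,
    show k + 1 + l + 1 = k + l + 1 + 1 by omega]
  push_cast [factorial_succ]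
  field_simp
  ring

lemma integral_betaDensity_mul_sub_sq_le (k l : ℕ) (hkl : 0 < k + l) (x : ℝ) :
    ∫ s in (0:ℝ)..1, betaDensity k l s * (s - x) ^ 2
      ≤ 3 / ((k + l : ℕ) : ℝ) + 2 * (k / ((k + l : ℕ) : ℝ) - x) ^ 2 := by
  have hk : (0:ℝ) ≤ k := k.cast_nonneg
  have hl : (0:ℝ) ≤ l := l.cast_nonneg
  have hm : (1:ℝ) ≤ k + l := by exact_mod_cast hkl
  rw [integral_betaDensity_mul_sub_sq]
  push_cast
  set μ : ℝ := (k + 1) / (k + l + 2)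
  -- second moment about `x` = variance + squared distance of the mean `μ` to `x`
  have hvar : (k + 1) * (k + 2) / ((k + l + 2) * (k + l + 3)) - 2 * x * μ + x ^ 2
      = (k + 1) * (l + 1) / ((k + l + 2) ^ 2 * (k + l + 3)) + (μ - x) ^ 2 := by
    simp only [μ]; field_simp; ring
  have hvar_le : (k + 1) * (l + 1) / ((k + l + 2) ^ 2 * (k + l + 3)) ≤ 1 / (k + l : ℝ) := by
    rw [div_le_div_iff₀ (by positivity) (by positivity)]
    have h1 : (k + 1) * (l + 1) ≤ (k + l + 2 : ℝ) ^ 2 := by nlinarith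
    nlinarith [mul_le_mul h1 (by linarith : (k + l : ℝ) ≤ k + l + 3) (by positivity)
      (by positivity)]
  have hmean : (μ - k / (k + l)) ^ 2 ≤ 1 / (k + l : ℝ) := by
    have : μ - k / (k + l) = (l - k) / ((k + l) * (k + l + 2)) := by
      simp only [μ]; field_simp; ring
    rw [this, div_pow, div_le_div_iff₀ (by positivity) (by positivity)]
    nlinarith [mul_nonneg hk hl]
  have hsplit : (μ - x) ^ 2 ≤ 2 * (μ - k / (k + l)) ^ 2 + 2 * (k / (k + l) - x) ^ 2 := by
    nlinarith [sq_nonneg (μ - k / (k + l) - (k / (k + l) - x))]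
  rw [hvar]
  have : 3 / (k + l : ℝ) = 1 / (k + l) + 2 * (1 / (k + l)) := by ring
  linarith

lemma factorial_mul_pow_mul_integral_div_pow {C : ℝ} (hC : C ≠ 0) (k l : ℕ)
    (f : ℝ → ℝ) :
    ((k + l + 1)! : ℝ) * (C ^ (k + l) *
      ∫ s in (0:ℝ)..1, s ^ k * (1 - s) ^ l / (k ! * l !) * f s) / C ^ (k + l)
      = ∫ s in (0:ℝ)..1, betaDensity k l s * f s := by
  rw [mul_left_comm, mul_div_cancel_left₀ _ (pow_ne_zero _ hC),
    ← intervalIntegral.integral_const_mul]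
  congr 1 with s
  simp only [betaDensity]
  ring

theorem stmt_11_general (C : ℝ) (hC : 0 < C) (y' : ℝ → ℝ)
    (hy' : ContinuousOn y' (Set.Icc (0:ℝ) 1))
    (S : ℕ → ℕ → ℝ)
    (hS : ∀ k l, S k l = C ^ (k + l) *
      ∫ s in (0:ℝ)..1, s ^ k * (1 - s) ^ l / (k.factorial * l.factorial) * y' s)
    (p q : ℕ → ℝ → ℕ)
    (hq : ∀ n, ∀ x ∈ Set.Icc (0:ℝ) 1, 0 < q n x)
    (hpq : ∀ n, ∀ x ∈ Set.Icc (0:ℝ) 1, (p n x : ℝ) / (q n x : ℝ) ∈ Set.Icc (0:ℝ) 1)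
    (hqinf : ∀ M : ℕ, ∃ N : ℕ, ∀ n ≥ N, ∀ x ∈ Set.Icc (0:ℝ) 1, M ≤ q n x)
    (hunif : ∀ ε > (0:ℝ), ∃ N : ℕ, ∀ n ≥ N, ∀ x ∈ Set.Icc (0:ℝ) 1,
        |(p n x : ℝ) / (q n x : ℝ) - x| < ε) :
    ∀ ε > (0:ℝ), ∃ N : ℕ, ∀ n ≥ N, ∀ x ∈ Set.Icc (0:ℝ) 1,
      |y' x - ((q n x + 1).factorial : ℝ) * S (p n x) (q n x - p n x) / C ^ (q n x)| < ε := by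
  intro ε hε
  obtain ⟨c, hc, hy'c⟩ := isCompact_Icc.exists_abs_sub_le_add_mul_dist_sq hy' (half_pos hε)
  have hsmall :
      Tendsto (fun e : ℕ × ℝ => c * (3 / e.1 + 2 * e.2 ^ 2)) (atTop ×ˢ 𝓝 0) (𝓝 0) := by
    simpa using ((tendsto_const_div_atTop_nhds_zero_nat 3).comp tendsto_fst).add
      (((continuous_pow 2).tendsto' 0 0 (zero_pow two_ne_zero)).comp tendsto_snd |>.const_mul 2)
      |>.const_mul c
  obtain ⟨P, hP, Q, hQ, hPQ⟩ :=
    eventually_prod_iff.1 (hsmall.eventually (gt_mem_nhds (half_pos hε)))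
  obtain ⟨m₀, hm₀⟩ := eventually_atTop.1 hP
  obtain ⟨d, hd, hdQ⟩ := Metric.eventually_nhds_iff.1 hQ
  obtain ⟨N₁, hN₁⟩ := hqinf m₀
  obtain ⟨N₂, hN₂⟩ := hunif d hd
  refine ⟨max N₁ N₂, fun n hn x hx => ?_⟩
  have hpq_le : p n x ≤ q n x := by
    have := (hpq n x hx).2
    rwa [div_le_one (by exact_mod_cast hq n x hx), Nat.cast_le] at this
  obtain ⟨l, hl⟩ : ∃ l, q n x = p n x + l := ⟨_, (Nat.add_sub_cancel' hpq_le).symm⟩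
  have hP' := hm₀ _ (hN₁ n (le_of_max_le_left hn) x hx)
  have hQ' : Q (p n x / q n x - x) :=
    hdQ (by simpa [Real.dist_eq] using hN₂ n (le_of_max_le_right hn) x hx)
  rw [hl] at hP' hQ'
  rw [hl, Nat.add_sub_cancel_left, hS, factorial_mul_pow_mul_integral_div_pow hC.ne']
  calc _ ≤ ε / 2 + c * ∫ s in (0:ℝ)..1, betaDensity (p n x) l s * (s - x) ^ 2 :=
        abs_sub_integral_mul_le zero_le_one (continuous_betaDensity _ _)
          (fun s hs => betaDensity_nonneg _ _ hs) (integral_betaDensity _ _) hy'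
          (fun s hs => by simpa [Real.dist_eq, sq_abs] using hy'c x hx s hs)
    _ ≤ ε / 2 + c * (3 / ((p n x + l : ℕ) : ℝ)
          + 2 * (p n x / ((p n x + l : ℕ) : ℝ) - x) ^ 2) := by
        gcongr
        exact integral_betaDensity_mul_sub_sq_le _ _ (hl ▸ hq n x hx) x
    _ < ε / 2 + ε / 2 := by gcongr; exact hPQ hP' hQ'
    _ = ε := add_halves ε

theorem stmt_11 (C : ℝ) (hC : 0 < C) (y y' : ℝ → ℝ)
    (hy : ∀ s ∈ Set.Icc (0:ℝ) 1, HasDerivAt y (y' s) s)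
    (hy' : ContinuousOn y' (Set.Icc (0:ℝ) 1))
    (S : ℕ → ℕ → ℝ)
    (hS : ∀ k l, S k l = C ^ (k + l) *
      ∫ s in (0:ℝ)..1, s ^ k * (1 - s) ^ l / (k.factorial * l.factorial) * y' s)
    (p q : ℕ → ℝ → ℕ)
    (hq : ∀ n, ∀ x ∈ Set.Icc (0:ℝ) 1, 0 < q n x)
    (hpq : ∀ n, ∀ x ∈ Set.Icc (0:ℝ) 1, (p n x : ℝ) / (q n x : ℝ) ∈ Set.Icc (0:ℝ) 1)
    (hqinf : ∀ M : ℕ, ∃ N : ℕ, ∀ n ≥ N, ∀ x ∈ Set.Icc (0:ℝ) 1, M ≤ q n x)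
    (hunif : ∀ ε > (0:ℝ), ∃ N : ℕ, ∀ n ≥ N, ∀ x ∈ Set.Icc (0:ℝ) 1,
        |(p n x : ℝ) / (q n x : ℝ) - x| < ε) :
    ∀ ε > (0:ℝ), ∃ N : ℕ, ∀ n ≥ N, ∀ x ∈ Set.Icc (0:ℝ) 1,
      |y' x - ((q n x + 1).factorial : ℝ) * S (p n x) (q n x - p n x) / C ^ (q n x)| < ε :=
  stmt_11_general C hC y' hy' S hS p q hq hpq hqinf hunif
end
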